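/- Let G be a finite simple graph with vertex set V, let p be a positive integer, and for each k ∈ {1,…,p} let W_k ⊆ V be a nonempty vertex subset whose induced subgraph in G is connected, and let g_i^k : ℝ^m → ℝ be a function for each i ∈ W_k. Define A := { u : V → ℝ^m : for all k, Σ_{i∈W_k} g_i^k(u(i)) ≤ 0 } and B := { (u, z) : for all k and all i ∈ W_k, g_i^k(u(i)) + Σ_{j∈N(i)∩W_k} (z(i,k) − z(j,k)) ≤ 0 }, where z assigns a real number z(i,k) to each pair (i,k) with i ∈ W_k. Let f_i : ℝ^m → ℝ for each i ∈ V and set F(u) := Σ_{i∈V} f_i(u(i)). Then the projection onto the u-coordinates of the set of minimizers of (u,z) ↦ F(u) over B equals the set of minimizers of F over A. -/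

import Mathlib

/-! On a constraint set `W k`, the coupling sums `∑ j ∈ N(i) ∩ W k, (z i - z j)` are the entries
of `L z`, with `L` the Laplacian of the subgraph induced on `W k`. That subgraph is connected, so
the kernel of the symmetric matrix `L` is spanned by the constant vector and its range is exactly
the hyperplane of sum-zero vectors. Hence `a + L z ≤ 0` is solvable in `z` iff `∑ i, a i ≤ 0`:
the projection of `B` is `A`, and minimizers of a function of `u` alone over `B` project onto
its minimizers over `A`. -/

open Finset Matrix

theorem image_fst_minimizers_eq_of_image_fst_eq {α β γ : Type*} [LE γ]
    {A : Set α} {B : Set (α × β)} (hBA : Prod.fst '' B = A) (F : α → γ) :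
    Prod.fst '' {x ∈ B | ∀ y ∈ B, F x.1 ≤ F y.1} = {a ∈ A | ∀ b ∈ A, F a ≤ F b} := by
  subst hBA
  ext a
  constructor
  · rintro ⟨x, ⟨hxB, hmin⟩, rfl⟩
    exact ⟨⟨x, hxB, rfl⟩, by rintro _ ⟨y, hyB, rfl⟩; exact hmin y hyB⟩
  · rintro ⟨⟨x, hxB, rfl⟩, hmin⟩
    exact ⟨x, ⟨hxB, fun y hyB => hmin y.1 ⟨y, hyB, rfl⟩⟩, rfl⟩

namespace SimpleGraph

section Laplacian

variable {α : Type*} [Fintype α] [DecidableEq α] (H : SimpleGraph α) [DecidableRel H.Adj]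

theorem sum_lapMatrix_mulVec {R : Type*} [CommRing R] (z : α → R) :
    ∑ v, (H.lapMatrix R *ᵥ z) v = 0 := by
  have h := dotProduct_mulVec (fun _ => (1 : R)) (H.lapMatrix R) z
  rw [← mulVec_transpose, (H.isSymm_lapMatrix (R := R)).eq, lapMatrix_mulVec_const_eq_zero,
    zero_dotProduct] at h
  simpa [dotProduct] using h

variable {H}

theorem Connected.finrank_ker_toLin'_lapMatrix (hH : H.Connected) :
    Module.finrank ℝ (LinearMap.ker (toLin' (H.lapMatrix ℝ))) = 1 := by
  classical
  have := hH.preconnected.subsingleton_connectedComponent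
  have : Nonempty H.ConnectedComponent := ⟨H.connectedComponentMk hH.nonempty.some⟩
  rw [← card_connectedComponent_eq_finrank_ker_toLin'_lapMatrix, Fintype.card_eq_one_iff]
  exact ⟨Classical.arbitrary _, fun _ => Subsingleton.elim _ _⟩

theorem Connected.exists_lapMatrix_mulVec_eq_iff (hH : H.Connected) (c : α → ℝ) :
    (∃ z, H.lapMatrix ℝ *ᵥ z = c) ↔ ∑ v, c v = 0 := by
  refine ⟨fun ⟨z, hz⟩ => hz ▸ H.sum_lapMatrix_mulVec z, fun hc => ?_⟩
  have : Nonempty α := hH.nonempty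
  let L := toLin' (H.lapMatrix ℝ)
  let φ : (α → ℝ) →ₗ[ℝ] ℝ := ∑ v, LinearMap.proj v
  have hφ (x : α → ℝ) : φ x = ∑ v, x v := by simp [φ]
  have hφsurj : Function.Surjective φ := fun r =>
    ⟨Pi.single (Classical.arbitrary α) r, by simp [hφ]⟩
  have hrange : LinearMap.range L ≤ LinearMap.ker φ := by
    rintro _ ⟨z, rfl⟩
    simpa [hφ, L] using H.sum_lapMatrix_mulVec z
  -- both sides of `hrange` have dimension `card α - 1`
  have hL := LinearMap.finrank_range_add_finrank_ker L
  have hφdim := LinearMap.finrank_range_add_finrank_ker φ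
  rw [hH.finrank_ker_toLin'_lapMatrix] at hL
  rw [LinearMap.range_eq_top.mpr hφsurj, finrank_top, Module.finrank_self] at hφdim
  obtain ⟨z, hz⟩ : c ∈ LinearMap.range L :=
    Submodule.eq_of_le_of_finrank_le hrange (by omega) ▸ (hφ c).trans hc
  exact ⟨z, hz⟩

end Laplacian

theorem lapMatrix_induce_mulVec_apply {V R : Type*} [Fintype V] [DecidableEq V] [NonAssocRing R]
    (G : SimpleGraph V) [DecidableRel G.Adj] (s : Finset V) (z : V → R) (i : (s : Set V)) :
    ((G.induce (s : Set V)).lapMatrix R *ᵥ fun v => z v) i =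
      ∑ j ∈ G.neighborFinset i ∩ s, (z i - z j) := by
  have hmap : ((G.induce (s : Set V)).neighborFinset i).map (Function.Embedding.subtype _) =
      G.neighborFinset i ∩ s := by
    ext j
    simp [and_comm]
  rw [lapMatrix_mulVec_apply, ← hmap, sum_sub_distrib, sum_const, card_map,
    card_neighborFinset_eq_degree, sum_map, nsmul_eq_mul]
  rfl

theorem exists_forall_add_sum_sub_nonpos_iff {V : Type*} [Fintype V] [DecidableEq V]
    {G : SimpleGraph V} [DecidableRel G.Adj] {s : Finset V}
    (hs : (G.induce (s : Set V)).Connected) (a : V → ℝ) :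
    (∃ z : V → ℝ, ∀ i ∈ s, a i + ∑ j ∈ G.neighborFinset i ∩ s, (z i - z j) ≤ 0) ↔
      ∑ i ∈ s, a i ≤ 0 := by
  have hsum (b : V → ℝ) : ∑ i ∈ s, b i = ∑ i : (s : Set V), b i := (sum_coe_sort s b).symm
  constructor
  · rintro ⟨z, hz⟩
    have hL := (G.induce (s : Set V)).sum_lapMatrix_mulVec (R := ℝ) fun v => z v
    simp only [lapMatrix_induce_mulVec_apply] at hL
    calc ∑ i ∈ s, a i
        = ∑ i ∈ s, (a i + ∑ j ∈ G.neighborFinset i ∩ s, (z i - z j)) := by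
          rw [sum_add_distrib, hsum fun i => ∑ j ∈ G.neighborFinset i ∩ s, (z i - z j), hL,
            add_zero]
      _ ≤ 0 := sum_nonpos hz
  · intro ha
    -- every agent is given the same share of the total slack `∑ i ∈ s, a i`
    let c : ↥(s : Set V) → ℝ := fun i => (∑ j ∈ s, a j) / #s - a i
    have hc : ∑ i, c i = 0 := by
      have : (#s : ℝ) ≠ 0 := by
        exact_mod_cast (card_pos.mpr (nonempty_coe_sort.mp hs.nonempty)).ne'
      rw [← hsum fun i => (∑ j ∈ s, a j) / #s - a i, sum_sub_distrib, sum_const, nsmul_eq_mul,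
        mul_div_cancel₀ _ this, sub_self]
    obtain ⟨w, hw⟩ := hs.exists_lapMatrix_mulVec_eq_iff c |>.mpr hc
    let z : V → ℝ := fun v => if hv : v ∈ s then w ⟨v, hv⟩ else 0
    have hzw : (fun v : ↥(s : Set V) => z v) = w := funext fun v => dif_pos v.2
    refine ⟨z, fun i hi => ?_⟩
    have hLz := lapMatrix_induce_mulVec_apply G s z ⟨i, hi⟩
    rw [hzw, hw] at hLz
    rw [← hLz]
    simpa [c] using div_nonpos_of_nonpos_of_nonneg ha (Nat.cast_nonneg #s)

end SimpleGraph

theorem proj_decoupled_minimizers_eq_coupled_minimizers_general {V : Type*} [Fintype V]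
    [DecidableEq V] (G : SimpleGraph V) [DecidableRel G.Adj] {m : ℕ}
    (p : ℕ) (W : Fin p → Finset V)
    (hWconn : ∀ k, (G.induce ((W k : Set V))).Connected)
    (g : Fin p → V → (Fin m → ℝ) → ℝ)
    (A : Set (V → Fin m → ℝ))
    (hA : A = {u : V → Fin m → ℝ | ∀ k : Fin p, ∑ i ∈ W k, g k i (u i) ≤ 0})
    (B : Set ((V → Fin m → ℝ) × (V → Fin p → ℝ)))
    (hB : B = {uz : (V → Fin m → ℝ) × (V → Fin p → ℝ) |
      ∀ k : Fin p, ∀ i ∈ W k,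
        g k i (uz.1 i) +
          ∑ j ∈ G.neighborFinset i ∩ W k, (uz.2 i k - uz.2 j k) ≤ 0})
    (F : (V → Fin m → ℝ) → ℝ) :
    Prod.fst '' {uz ∈ B | ∀ vz ∈ B, F uz.1 ≤ F vz.1} =
      {u ∈ A | ∀ v ∈ A, F u ≤ F v} := by
  refine image_fst_minimizers_eq_of_image_fst_eq (Set.ext fun u => ?_) F
  have hfeas k :=
    SimpleGraph.exists_forall_add_sum_sub_nonpos_iff (hWconn k) fun i => g k i (u i)
  subst hA hB
  simp only [Set.mem_image, Set.mem_ofPred_eq, Prod.exists, exists_and_right, exists_eq_right]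
  constructor
  · rintro ⟨z, hz⟩ k
    exact (hfeas k).mp ⟨fun i => z i k, hz k⟩
  · intro hu
    choose z hz using fun k => (hfeas k).mpr (hu k)
    exact ⟨fun i k => z k i, hz⟩

/-- Proposition 1 (equivalence between the two optimization formulations):
minimizing the separable objective `F u = Σ_{i∈V} f i (u i)` over the decoupled
feasible set `B` and projecting onto the `u`-coordinates recovers exactly the
minimizers of `F` over the coupled feasible set `A`. -/
theorem proj_decoupled_minimizers_eq_coupled_minimizers {V : Type*} [Fintype V]
    [DecidableEq V] (G : SimpleGraph V) [DecidableRel G.Adj] {m : ℕ}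
    (p : ℕ) (hp : 0 < p) (W : Fin p → Finset V)
    (hW : ∀ k, (W k).Nonempty)
    (hWconn : ∀ k, (G.induce ((W k : Set V))).Connected)
    (g : Fin p → V → (Fin m → ℝ) → ℝ)
    (A : Set (V → Fin m → ℝ))
    (hA : A = {u : V → Fin m → ℝ | ∀ k : Fin p, ∑ i ∈ W k, g k i (u i) ≤ 0})
    (B : Set ((V → Fin m → ℝ) × (V → Fin p → ℝ)))
    (hB : B = {uz : (V → Fin m → ℝ) × (V → Fin p → ℝ) |
      ∀ k : Fin p, ∀ i ∈ W k,
        g k i (uz.1 i) +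
          ∑ j ∈ G.neighborFinset i ∩ W k, (uz.2 i k - uz.2 j k) ≤ 0})
    (f : V → (Fin m → ℝ) → ℝ) (F : (V → Fin m → ℝ) → ℝ)
    (hF : F = fun u => ∑ i : V, f i (u i)) :
    Prod.fst '' {uz ∈ B | ∀ vz ∈ B, F uz.1 ≤ F vz.1} =
      {u ∈ A | ∀ v ∈ A, F u ≤ F v} :=
  proj_decoupled_minimizers_eq_coupled_minimizers_general G p W hWconn g A hA B hB F
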